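/- Each Y_t is integrable, and the Azéma–Yor process Y = (Y_t)_{t∈ℕ} is a supermartingale. -/

import Mathlib

open MeasureTheory Filter Set

/-- The running maximum `S t = max_{s ≤ t} M s`. -/
noncomputable def runMax {Ω : Type*} (M : ℕ → Ω → ℝ) (t : ℕ) (ω : Ω) : ℝ :=
  (Finset.range (t + 1)).sup' (Finset.nonempty_range_iff.mpr (Nat.succ_ne_zero t))
    (fun s => M s ω)

/-- The ultimate supremum `S_∞ = sup_t M_t`. -/
noncomputable def supAll {Ω : Type*} (M : ℕ → Ω → ℝ) (ω : Ω) : ℝ :=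
  ⨆ t : ℕ, M t ω

/-- `𝒢 s = ∫_0^1 g(s/u) du`. -/
noncomputable def calG (g : ℝ → ℝ) (s : ℝ) : ℝ :=
  ∫ u in Set.Ioc (0 : ℝ) 1, g (s / u)

/-- `𝒢′ s = ∫_s^∞ (g(x) − g(s))/x² dx`. -/
noncomputable def calG' (g : ℝ → ℝ) (s : ℝ) : ℝ :=
  ∫ x in Set.Ioi s, (g x - g s) / x ^ 2

/-- The Azéma–Yor process `Y t = 𝒢(S t) − (S t − M t)·𝒢′(S t)`. -/
noncomputable def ayProc {Ω : Type*} (g : ℝ → ℝ) (M : ℕ → Ω → ℝ) (t : ℕ) (ω : Ω) : ℝ :=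
  calG g (runMax M t ω) - (runMax M t ω - M t ω) * calG' g (runMax M t ω)

/-!
Substituting `u = s / x` gives `𝒢 s = s ∫ₛ^∞ g x / x² dx = s 𝒢′ s + g s`, so the Azéma–Yor process
is `Y t = g (S t) + M t 𝒢′ (S t)`. While the running maximum stays put, the increment of `Y` is
`𝒢′ (S t) (M (t + 1) - M t)`. When `M (t + 1)` sets a new maximum, monotonicity of `g` gives
`(g s' - g s) / s' ≤ 𝒢′ s - 𝒢′ s'` for `s ≤ s'`, which turns that equality into an inequality.
Hence `Y` minus the discrete stochastic integral `∑ 𝒢′ (S k) (M (k + 1) - M k)` is nonincreasing,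
and that integral is a supermartingale because `0 ≤ 𝒢′ (S k) ≤ 𝒢′ 1`.
-/

section calG

variable {g : ℝ → ℝ} {s s' : ℝ}

lemma integrableOn_Ioi_inv_sq (hs : 0 < s) : IntegrableOn (fun x : ℝ => (x ^ 2)⁻¹) (Ioi s) :=
  (integrableOn_Ioi_rpow_of_lt (by norm_num : (-2 : ℝ) < -1) hs).congr_fun
    (fun x hx => by simp [Real.rpow_neg (hs.trans hx).le]) measurableSet_Ioi

lemma integral_Ioi_inv_sq (hs : 0 < s) : ∫ x in Ioi s, (x ^ 2)⁻¹ = s⁻¹ := by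
  rw [setIntegral_congr_fun measurableSet_Ioi
    (fun x hx => by simp [Real.rpow_neg (hs.trans hx).le] : EqOn (fun x : ℝ => (x ^ 2)⁻¹)
      (fun x => x ^ (-2 : ℝ)) (Ioi s)), integral_Ioi_rpow_of_lt (by norm_num) hs]
  norm_num [Real.rpow_neg_one]

lemma image_div_Ioi (hs : 0 < s) : (s / ·) '' Ioi s = Ioo 0 1 := by
  ext u
  constructor
  · rintro ⟨x, hx, rfl⟩
    exact ⟨div_pos hs (hs.trans hx), (div_lt_one (hs.trans hx)).mpr hx⟩
  · rintro ⟨hu0, hu1⟩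
    exact ⟨s / u, (lt_div_iff₀ hu0).mpr (by nlinarith), by field_simp⟩

lemma calG_eq_mul_integral (hs : 0 < s) : calG g s = s * ∫ x in Ioi s, g x / x ^ 2 := by
  have hderiv : ∀ x ∈ Ioi s, HasDerivWithinAt (s / ·) (-(s * (x ^ 2)⁻¹)) (Ioi s) x := by
    intro x hx
    simpa [div_eq_mul_inv] using
      (((hasDerivAt_inv (hs.trans hx).ne').const_mul s).hasDerivWithinAt (s := Ioi s))
  have hinj : InjOn (s / ·) (Ioi s) := fun x hx y hy hxy => by
    rw [div_eq_div_iff (hs.trans hx).ne' (hs.trans hy).ne'] at hxy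
    exact (mul_left_cancel₀ hs.ne' hxy).symm
  rw [calG, integral_Ioc_eq_integral_Ioo, ← image_div_Ioi hs,
    integral_image_eq_integral_abs_deriv_smul measurableSet_Ioi hderiv hinj,
    ← integral_const_mul]
  refine setIntegral_congr_fun measurableSet_Ioi (fun x hx => ?_)
  have hx0 : 0 < x := hs.trans hx
  simp only [smul_eq_mul, abs_neg, abs_mul, abs_of_pos hs, abs_of_pos (inv_pos.2 (pow_pos hx0 2)),
    div_div_cancel₀ hs.ne']
  field_simp

lemma integrableOn_Ioi_sub_div_sq (hs : 0 < s) (hg : IntegrableOn (fun x => g x / x ^ 2) (Ioi s))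
    (c : ℝ) : IntegrableOn (fun x => (g x - c) / x ^ 2) (Ioi s) := by
  simpa only [sub_div, div_eq_mul_inv c, Pi.sub_def] using
    hg.sub ((integrableOn_Ioi_inv_sq hs).const_mul c)

lemma integral_Ioi_sub_div_sq (hs : 0 < s) (hg : IntegrableOn (fun x => g x / x ^ 2) (Ioi s))
    (c : ℝ) : ∫ x in Ioi s, (g x - c) / x ^ 2 = (∫ x in Ioi s, g x / x ^ 2) - c / s := by
  simp only [sub_div, div_eq_mul_inv c]
  rw [integral_sub hg ((integrableOn_Ioi_inv_sq hs).const_mul c), integral_const_mul,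
    integral_Ioi_inv_sq hs]

lemma calG_eq_mul_calG'_add (hs : 0 < s) (hg : IntegrableOn (fun x => g x / x ^ 2) (Ioi s)) :
    calG g s = s * calG' g s + g s := by
  rw [calG_eq_mul_integral hs, calG', integral_Ioi_sub_div_sq hs hg]
  field_simp
  ring

lemma calG'_nonneg (hmono : MonotoneOn g (Ici s)) : 0 ≤ calG' g s :=
  setIntegral_nonneg measurableSet_Ioi fun x hx =>
    div_nonneg (sub_nonneg.2 (hmono self_mem_Ici (mem_Ici.2 hx.le) hx.le))
      (sq_nonneg x)

lemma sub_div_le_calG'_sub (hmono : MonotoneOn g (Ici s)) (hs : 0 < s)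
    (hg : IntegrableOn (fun x => g x / x ^ 2) (Ioi s)) (hss' : s ≤ s') :
    (g s' - g s) / s' ≤ calG' g s - calG' g s' := by
  have hs' : 0 < s' := hs.trans_le hss'
  have hg' := hg.mono_set (Ioi_subset_Ioi hss')
  have key : ∫ x in Ioi s', (g x - g s) / x ^ 2 ≤ ∫ x in Ioi s, (g x - g s) / x ^ 2 :=
    setIntegral_mono_set (integrableOn_Ioi_sub_div_sq hs hg _)
      ((ae_restrict_mem measurableSet_Ioi).mono fun x hx =>
        div_nonneg (sub_nonneg.2 (hmono self_mem_Ici (mem_Ici.2 hx.le) hx.le))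
          (sq_nonneg x))
      (Ioi_subset_Ioi hss').eventuallyLE
  rw [integral_Ioi_sub_div_sq hs' hg', integral_Ioi_sub_div_sq hs hg] at key
  rw [calG', calG', integral_Ioi_sub_div_sq hs' hg', integral_Ioi_sub_div_sq hs hg, sub_div]
  linarith

lemma calG'_antitoneOn (hmono : MonotoneOn g (Ioi 0))
    (hint : ∀ a ∈ Ioi (0 : ℝ), IntegrableOn (fun x => g x / x ^ 2) (Ioi a)) :
    AntitoneOn (calG' g) (Ioi 0) := fun s hs s' hs' hss' => by
  have := sub_div_le_calG'_sub (hmono.mono (Ici_subset_Ioi.2 hs)) hs (hint s hs) hss'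
  have := div_nonneg (sub_nonneg.2 (hmono hs hs' hss')) (le_of_lt hs')
  linarith

lemma le_add_mul_calG' (hmono : MonotoneOn g (Ici s)) (hs : 0 < s)
    (hg : IntegrableOn (fun x => g x / x ^ 2) (Ioi s)) (hss' : s ≤ s') :
    g s' ≤ g s + s' * calG' g s := by
  have h := sub_div_le_calG'_sub hmono hs hg hss'
  have := calG'_nonneg (hmono.mono (Ici_subset_Ici.2 hss'))
  rw [div_le_iff₀ (hs.trans_le hss')] at h
  nlinarith

lemma g_max_add_mul_calG'_max_le (hmono : MonotoneOn g (Ici s)) (hs : 0 < s)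
    (hg : IntegrableOn (fun x => g x / x ^ 2) (Ioi s)) (m : ℝ) :
    g (max m s) + m * calG' g (max m s) ≤ g s + m * calG' g s := by
  rcases le_total m s with h | h
  · rw [max_eq_right h]
  · rw [max_eq_left h]
    have key := sub_div_le_calG'_sub hmono hs hg h
    rw [div_le_iff₀ (hs.trans_le h)] at key
    linarith

end calG

lemma MonotoneOn.measurable_comp {α : Type*} {m : MeasurableSpace α} {f : ℝ → ℝ} {a : ℝ}
    {X : α → ℝ} (hf : MonotoneOn f (Ici a)) (hX : Measurable X) (ha : ∀ x, a ≤ X x) :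
    Measurable fun x => f (X x) := by
  have : Monotone fun y => f (max a y) := fun y z h =>
    hf (le_max_left a y) (le_max_left a z) (max_le_max le_rfl h)
  simpa only [Function.comp_def, max_eq_right (ha _)] using this.measurable.comp hX

lemma AntitoneOn.measurable_comp {α : Type*} {m : MeasurableSpace α} {f : ℝ → ℝ} {a : ℝ}
    {X : α → ℝ} (hf : AntitoneOn f (Ici a)) (hX : Measurable X) (ha : ∀ x, a ≤ X x) :
    Measurable fun x => f (X x) := by
  have : Antitone fun y => f (max a y) := fun y z h =>
    hf (le_max_left a y) (le_max_left a z) (max_le_max le_rfl h)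
  simpa only [Function.comp_def, max_eq_right (ha _)] using this.measurable.comp hX

section runMax

variable {Ω : Type*} (M : ℕ → Ω → ℝ)

lemma runMax_zero : runMax M 0 = M 0 := by
  ext ω
  simp [runMax]

lemma runMax_succ (t : ℕ) : runMax M (t + 1) = M (t + 1) ⊔ runMax M t := by
  ext ω
  simp only [runMax, Finset.range_add_one (n := t + 1), Pi.sup_apply]
  rw [Finset.sup'_insert]

lemma le_runMax {s t : ℕ} (h : s ≤ t) (ω : Ω) : M s ω ≤ runMax M t ω :=
  Finset.le_sup' (fun s => M s ω) (Finset.mem_range.2 (Nat.lt_succ_of_le h))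

variable {M} {m0 : MeasurableSpace Ω}

lemma stronglyAdapted_runMax {ℱ : Filtration ℕ m0} (hM : StronglyAdapted ℱ M) :
    StronglyAdapted ℱ (runMax M) := by
  intro t
  induction t with
  | zero => simpa only [runMax_zero] using hM 0
  | succ t ih =>
    simpa only [runMax_succ] using
      ((hM (t + 1)).measurable.sup
        (ih.measurable.mono (ℱ.mono t.le_succ) le_rfl)).stronglyMeasurable

lemma integrable_runMax {μ : Measure Ω} (hM : ∀ t, Integrable (M t) μ) (t : ℕ) :
    Integrable (runMax M t) μ := by
  induction t with
  | zero => simpa only [runMax_zero] using hM 0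
  | succ t ih => simpa only [runMax_succ] using (hM (t + 1)).sup ih

end runMax

section Supermartingale

variable {Ω : Type*} {m0 : MeasurableSpace Ω} {μ : Measure Ω} [IsFiniteMeasure μ]
  {ℱ : Filtration ℕ m0}

lemma supermartingale_of_succ_le {A : ℕ → Ω → ℝ} (hA : StronglyAdapted ℱ A)
    (hAi : ∀ t, Integrable (A t) μ) (hle : ∀ t, A (t + 1) ≤ A t) : Supermartingale A ℱ μ :=
  supermartingale_nat hA hAi fun t => by
    simpa only [condExp_of_stronglyMeasurable (ℱ.le t) (hA t) (hAi t)] using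
      condExp_mono (m := ℱ t) (hAi (t + 1)) (hAi t) (ae_of_all _ (hle t))

lemma supermartingale_of_succ_le_add_mul_sub {Y M H : ℕ → Ω → ℝ} {R : ℝ}
    (hM : Supermartingale M ℱ μ) (hY : StronglyAdapted ℱ Y) (hYi : ∀ t, Integrable (Y t) μ)
    (hH : StronglyAdapted ℱ H) (hHR : ∀ t ω, H t ω ≤ R) (hH0 : ∀ t ω, 0 ≤ H t ω)
    (hle : ∀ t ω, Y (t + 1) ω ≤ Y t ω + H t ω * (M (t + 1) ω - M t ω)) :
    Supermartingale Y ℱ μ := by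
  set Z : ℕ → Ω → ℝ := fun t => ∑ k ∈ Finset.range t, H k * (M (k + 1) - M k)
  have hZ : Supermartingale Z ℱ μ := by
    have hZ_eq : (-fun t => ∑ k ∈ Finset.range t, H k * ((-M) (k + 1) - (-M) k)) = Z := by
      ext t ω
      simp only [Z, Pi.neg_apply, Finset.sum_apply, Pi.mul_apply, Pi.sub_apply,
        ← Finset.sum_neg_distrib]
      exact Finset.sum_congr rfl fun k _ => by ring
    exact hZ_eq ▸ (hM.neg.sum_mul_sub hH hHR hH0).neg
  have hYZ : Supermartingale (Y - Z) ℱ μ :=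
    supermartingale_of_succ_le (hY.sub hZ.stronglyAdapted)
      (fun t => (hYi t).sub (hZ.integrable t)) fun t ω => by
        simp only [Z, Pi.sub_apply, Pi.add_apply, Pi.mul_apply, Finset.sum_range_succ,
          Finset.sum_apply]
        linarith [hle t ω]
  simpa using hYZ.add hZ

end Supermartingale

section AzemaYor

variable {Ω : Type*} {g : ℝ → ℝ} {M : ℕ → Ω → ℝ}

lemma ayProc_eq_add_mul (hint : ∀ a ∈ Ioi (0 : ℝ), IntegrableOn (fun x => g x / x ^ 2) (Ioi a))
    {t : ℕ} {ω : Ω} (hS : 0 < runMax M t ω) :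
    ayProc g M t ω = g (runMax M t ω) + M t ω * calG' g (runMax M t ω) := by
  rw [ayProc, calG_eq_mul_calG'_add hS (hint _ hS)]
  ring

lemma ayProc_succ_le (hmono : MonotoneOn g (Ioi 0))
    (hint : ∀ a ∈ Ioi (0 : ℝ), IntegrableOn (fun x => g x / x ^ 2) (Ioi a))
    {t : ℕ} {ω : Ω} (hS : 0 < runMax M t ω) :
    ayProc g M (t + 1) ω ≤
      ayProc g M t ω + calG' g (runMax M t ω) * (M (t + 1) ω - M t ω) := by
  have hS' : 0 < runMax M (t + 1) ω := hS.trans_le (by rw [runMax_succ]; exact le_sup_right)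
  rw [ayProc_eq_add_mul hint hS, ayProc_eq_add_mul hint hS', runMax_succ, Pi.sup_apply]
  linarith [g_max_add_mul_calG'_max_le (hmono.mono (Ici_subset_Ioi.2 hS)) hS (hint _ hS)
    (M (t + 1) ω)]

variable {m0 : MeasurableSpace Ω} {ℱ : Filtration ℕ m0} {a : ℝ} (hmono : MonotoneOn g (Ioi 0))
  (hint : ∀ a ∈ Ioi (0 : ℝ), IntegrableOn (fun x => g x / x ^ 2) (Ioi a))
  (hM : StronglyAdapted ℱ M) (ha : 0 < a) (hS : ∀ t ω, a ≤ runMax M t ω)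
include hmono hint hM ha hS

lemma stronglyAdapted_calG'_runMax : StronglyAdapted ℱ fun t ω => calG' g (runMax M t ω) :=
  fun t => (((calG'_antitoneOn hmono hint).mono (Ici_subset_Ioi.2 ha)).measurable_comp
    (stronglyAdapted_runMax hM t).measurable (hS t)).stronglyMeasurable

lemma stronglyAdapted_ayProc : StronglyAdapted ℱ (ayProc g M) := fun t => by
  have hg : StronglyMeasurable[ℱ t] fun ω => g (runMax M t ω) :=
    ((hmono.mono (Ici_subset_Ioi.2 ha)).measurable_comp
      (stronglyAdapted_runMax hM t).measurable (hS t)).stronglyMeasurable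
  have hY : ayProc g M t = fun ω => g (runMax M t ω) + M t ω * calG' g (runMax M t ω) :=
    funext fun ω => ayProc_eq_add_mul hint (ha.trans_le (hS t ω))
  rw [hY]
  exact hg.add ((hM t).mul (stronglyAdapted_calG'_runMax hmono hint hM ha hS t))

lemma integrable_ayProc {μ : Measure Ω} [IsFiniteMeasure μ] (hMi : ∀ t, Integrable (M t) μ)
    (t : ℕ) : Integrable (ayProc g M t) μ := by
  have hbound : Integrable (fun ω => |g a| + runMax M t ω * calG' g a + |M t ω| * calG' g a) μ :=
    ((integrable_const _).add ((integrable_runMax hMi t).mul_const _)).add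
      ((hMi t).abs.mul_const _)
  refine hbound.mono'
    ((stronglyAdapted_ayProc hmono hint hM ha hS t).mono (ℱ.le t)).aestronglyMeasurable
    (ae_of_all _ fun ω => ?_)
  have hmonoa := hmono.mono (Ici_subset_Ioi.2 ha)
  have hSω := hS t ω
  have hSpos := ha.trans_le hSω
  have hg_ge : g a ≤ g (runMax M t ω) := hmonoa self_mem_Ici hSω hSω
  have hg_le := le_add_mul_calG' hmonoa ha (hint a ha) hSω
  have hG'_nonneg := calG'_nonneg (hmono.mono (Ici_subset_Ioi.2 hSpos))
  have hG'_le := calG'_antitoneOn hmono hint (mem_Ioi.2 ha) (mem_Ioi.2 hSpos) hSω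
  have hMG' : |M t ω * calG' g (runMax M t ω)| ≤ |M t ω| * calG' g a := by
    rw [abs_mul, abs_of_nonneg hG'_nonneg]
    exact mul_le_mul_of_nonneg_left hG'_le (abs_nonneg _)
  rw [Real.norm_eq_abs, ayProc_eq_add_mul hint hSpos, abs_le]
  constructor <;> nlinarith [abs_le.1 hMG', neg_abs_le (g a), le_abs_self (g a)]

end AzemaYor

theorem stmt11_general {Ω : Type*} {m0 : MeasurableSpace Ω} {P : Measure Ω} [IsProbabilityMeasure P]
    (ℱ : Filtration ℕ m0) (M : ℕ → Ω → ℝ)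
    (hsuper : Supermartingale M ℱ P)
    (hone : ∀ ω, M 0 ω = 1)
    (g : ℝ → ℝ)
    (hmono : MonotoneOn g (Set.Ioi 0))
    (hint : ∀ a ∈ Set.Ioi (0 : ℝ), IntegrableOn (fun x => g x / x ^ 2) (Set.Ioi a)) :
    (∀ t : ℕ, Integrable (ayProc g M t) P)
    ∧ Supermartingale (ayProc g M) ℱ P := by
  have hS : ∀ t ω, 1 ≤ runMax M t ω := fun t ω => hone ω ▸ le_runMax M t.zero_le ω
  have hS0 : ∀ t ω, 0 < runMax M t ω := fun t ω => one_pos.trans_le (hS t ω)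
  have hM := hsuper.stronglyAdapted
  have hYi := integrable_ayProc hmono hint hM one_pos hS hsuper.integrable
  exact ⟨hYi, supermartingale_of_succ_le_add_mul_sub hsuper
    (stronglyAdapted_ayProc hmono hint hM one_pos hS) hYi
    (stronglyAdapted_calG'_runMax hmono hint hM one_pos hS)
    (fun t ω => calG'_antitoneOn hmono hint (mem_Ioi.2 one_pos) (hS0 t ω) (hS t ω))
    (fun t ω => calG'_nonneg (hmono.mono (Ici_subset_Ioi.2 (hS0 t ω))))
    (fun t ω => ayProc_succ_le hmono hint (hS0 t ω))⟩

/-- Each `Y t` is integrable and the Azéma–Yor process is a supermartingale. -/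
theorem stmt11 {Ω : Type*} {m0 : MeasurableSpace Ω} {P : Measure Ω} [IsProbabilityMeasure P]
    (ℱ : Filtration ℕ m0) (M : ℕ → Ω → ℝ)
    (hsuper : Supermartingale M ℱ P) (hnonneg : ∀ t ω, 0 ≤ M t ω)
    (hone : ∀ ω, M 0 ω = 1)
    (g : ℝ → ℝ)
    (hg0 : ∀ x ∈ Set.Ioi (0 : ℝ), 0 ≤ g x)
    (hmono : MonotoneOn g (Set.Ioi 0))
    (hint : ∀ a ∈ Set.Ioi (0 : ℝ), IntegrableOn (fun x => g x / x ^ 2) (Set.Ioi a)) :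
    (∀ t : ℕ, Integrable (ayProc g M t) P)
    ∧ Supermartingale (ayProc g M) ℱ P :=
  stmt11_general ℱ M hsuper hone g hmono hint
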